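/- arXiv:1311.7092 — 4 statements merged into one kernel-verified Lean document; each statement's English description precedes it below -/
import Mathlib

section
/- For every n ≥ 2 there exists a unique unital K-algebra homomorphism F_n : TLhat_n(q) → TLhat_{n+1}(q) such that F_n(t_{σ_i}) = g_{σ_i} for all 1 ≤ i ≤ n−1 and F_n(t_{a_n}) = g_{σ_n}·g_{a_{n+1}}·g_{σ_n}^{−1}. -/
namespace AffineTL

open FreeAlgebra

/-- Cyclic successor on `Fin m`. -/
def csucc {m : ℕ} (i : Fin m) : Fin m := ⟨(i.val + 1) % m, Nat.mod_lt _ i.pos⟩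

/-- The defining relations of the affine Temperley–Lieb algebra `TLhat_m(q)` with `m`
generators (indexed so that `g_{σ_i}` has index `i - 1` and `g_{a_m}` has index `m - 1`).
For `m = 1` the unique generator is set to `0`, so that `TLhat_1(q) ≅ K`. -/
inductive ATLRel {K : Type*} [CommRing K] (q : K) (m : ℕ) :
    FreeAlgebra K (Fin m) → FreeAlgebra K (Fin m) → Prop
  | degen (h : m ≤ 1) (i : Fin m) : ATLRel q m (ι K i) 0
  | quad (h : 2 ≤ m) (i : Fin m) :
      ATLRel q m (ι K i * ι K i) ((q - 1) • ι K i + algebraMap K _ q)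
  | comm (h : 3 ≤ m) (i j : Fin m) (h1 : i ≠ j) (h2 : j ≠ csucc i) (h3 : i ≠ csucc j) :
      ATLRel q m (ι K i * ι K j) (ι K j * ι K i)
  | braid (h : 3 ≤ m) (i : Fin m) :
      ATLRel q m (ι K i * ι K (csucc i) * ι K i) (ι K (csucc i) * ι K i * ι K (csucc i))
  | vrel (h : 3 ≤ m) (i : Fin m) :
      ATLRel q m (ι K i * ι K (csucc i) * ι K i + ι K i * ι K (csucc i) + ι K (csucc i) * ι K i
        + ι K i + ι K (csucc i) + 1) 0

/-- The affine Temperley–Lieb algebra `TLhat_m(q)` of type `Ã`. -/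
abbrev ATL (K : Type*) [CommRing K] (q : K) (m : ℕ) : Type _ := RingQuot (ATLRel q m)

/-- The generators of `TLhat_m(q)`. -/
noncomputable def g {K : Type*} [CommRing K] (q : K) (m : ℕ) (i : Fin m) : ATL K q m :=
  RingQuot.mkAlgHom K (ATLRel q m) (ι K i)

/-- The defining relations of the type `A` Temperley–Lieb algebra `TL_n(q)` with `n`
generators (`g_{σ_i}` has index `i - 1`). -/
inductive TLARel {K : Type*} [CommRing K] (q : K) (n : ℕ) :
    FreeAlgebra K (Fin n) → FreeAlgebra K (Fin n) → Prop
  | quad (i : Fin n) :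
      TLARel q n (ι K i * ι K i) ((q - 1) • ι K i + algebraMap K _ q)
  | comm (i j : Fin n) (h : i.val + 2 ≤ j.val ∨ j.val + 2 ≤ i.val) :
      TLARel q n (ι K i * ι K j) (ι K j * ι K i)
  | braid (i j : Fin n) (h : j.val = i.val + 1) :
      TLARel q n (ι K i * ι K j * ι K i) (ι K j * ι K i * ι K j)
  | vrel (i j : Fin n) (h : j.val = i.val + 1) :
      TLARel q n (ι K i * ι K j * ι K i + ι K i * ι K j + ι K j * ι K i
        + ι K i + ι K j + 1) 0

/-- The type `A` Temperley–Lieb algebra `TL_n(q)`. -/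
abbrev TLA (K : Type*) [CommRing K] (q : K) (n : ℕ) : Type _ := RingQuot (TLARel q n)

/-- The generators of `TL_n(q)`. -/
noncomputable def gA {K : Type*} [CommRing K] (q : K) (n : ℕ) (i : Fin n) : TLA K q n :=
  RingQuot.mkAlgHom K (TLARel q n) (ι K i)

/-- The formal inverse `q⁻¹·(x − (q−1))` of an element satisfying `x² = (q−1)x + q`. -/
noncomputable def qinv {K : Type*} [CommRing K] (q : K) {A : Type*} [Ring A] [Algebra K A]
    (x : A) : A :=
  Ring.inverse q • (x - algebraMap K A (q - 1))

/-- A trace on a `K`-algebra: a `K`-linear form vanishing on commutators. -/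
def IsTrace {K : Type*} [CommRing K] {A : Type*} [Ring A] [Algebra K A]
    (τ : A →ₗ[K] K) : Prop :=
  ∀ x y : A, τ (x * y) = τ (y * x)

/-- The element `G = g_{σ_n}⋯g_{σ_1}·g_{a_{n+1}}` of `TLhat_{n+1}(q)`. -/
noncomputable def bigG {K : Type*} [CommRing K] (q : K) (n : ℕ) : ATL K q (n + 1) :=
  (List.ofFn fun j : Fin n => g q (n + 1) ⟨n - 1 - j.val, by omega⟩).prod *
    g q (n + 1) (Fin.last n)

/-- The inverse `G⁻¹ = g_{a_{n+1}}⁻¹·g_{σ_1}⁻¹⋯g_{σ_n}⁻¹` of `bigG`. -/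
noncomputable def bigGinv {K : Type*} [CommRing K] (q : K) (n : ℕ) : ATL K q (n + 1) :=
  qinv q (g q (n + 1) (Fin.last n)) *
    (List.ofFn fun j : Fin n => qinv q (g q (n + 1) j.castSucc)).prod

end AffineTL

/-!
Write `t = g_{σ_n}` and `a = g_{a_{n+1}}`. The braid relation `t a t = a t a` gives
`t a t⁻¹ = a⁻¹ t a`. Hence conjugation by `a⁻¹` fixes `g_{σ_1}, …, g_{σ_{n-1}}` and sends `t` to
`t a t⁻¹`, while conjugation by `t` fixes `g_{σ_1}, …, g_{σ_{n-2}}` and sends `a` to `t a t⁻¹`.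
Every relation of `TLhat_n(q)` involves two generators, and for each such pair the proposed images
are, under the identity or one of these two inner automorphisms, the images of two generators of
`TLhat_{n+1}(q)` standing in the same relation. Uniqueness holds because the `t`'s generate.
-/

namespace AffineTL

open FreeAlgebra

section Units

variable (K : Type*) [CommRing K] {A : Type*} [Ring A] [Algebra K A]

noncomputable def conjAlgHom (u : Aˣ) : A →ₐ[K] A :=
  MulSemiringAction.toAlgHom K A (ConjAct.toConjAct u)

variable {K}

theorem conjAlgHom_apply (u : Aˣ) (x : A) : conjAlgHom K u x = u * x * ↑u⁻¹ := rfl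

theorem conjAlgHom_eq_self {u : Aˣ} {x : A} (h : Commute (u : A) x) : conjAlgHom K u x = x := by
  rw [conjAlgHom_apply, h.eq, Units.mul_inv_cancel_right]

variable {q : K}

theorem mul_qinv_of_quadratic (hq : IsUnit q) {x : A}
    (hx : x * x = (q - 1) • x + algebraMap K A q) : x * qinv q x = 1 := by
  have h : x * (x - algebraMap K A (q - 1)) = algebraMap K A q := by
    rw [mul_sub, hx, ← Algebra.commutes, ← Algebra.smul_def]; abel
  rw [qinv, mul_smul_comm, h, Algebra.algebraMap_eq_smul_one, smul_smul,
    Ring.inverse_mul_cancel _ hq, one_smul]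

theorem qinv_mul_of_quadratic (hq : IsUnit q) {x : A}
    (hx : x * x = (q - 1) • x + algebraMap K A q) : qinv q x * x = 1 := by
  have h : (x - algebraMap K A (q - 1)) * x = algebraMap K A q := by
    rw [sub_mul, hx, ← Algebra.smul_def]; abel
  rw [qinv, smul_mul_assoc, h, Algebra.algebraMap_eq_smul_one, smul_smul,
    Ring.inverse_mul_cancel _ hq, one_smul]

noncomputable def unitOfQuadratic (hq : IsUnit q) {x : A}
    (hx : x * x = (q - 1) • x + algebraMap K A q) : Aˣ :=
  ⟨x, qinv q x, mul_qinv_of_quadratic hq hx, qinv_mul_of_quadratic hq hx⟩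

end Units

theorem inv_mul_mul_eq_mul_mul_inv_of_braid {G : Type*} [Group G] {a t : G}
    (h : t * a * t = a * t * a) : a⁻¹ * t * a = t * a * t⁻¹ := by
  rw [eq_mul_inv_iff_mul_eq, mul_assoc, mul_assoc, inv_mul_eq_iff_eq_mul, ← mul_assoc, h,
    mul_assoc]

section Relations

variable {K : Type*} [CommRing K] (q : K) {m : ℕ}

theorem csucc_val (i : Fin m) :
    (csucc i : ℕ) = if (i : ℕ) + 1 = m then 0 else (i : ℕ) + 1 := by
  have := i.isLt
  split_ifs with h
  · simp [csucc, h]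
  · exact Nat.mod_eq_of_lt (by omega)

theorem g_sq (h : 2 ≤ m) (i : Fin m) :
    g q m i * g q m i = (q - 1) • g q m i + algebraMap K (ATL K q m) q := by
  simpa only [g, map_mul, map_add, map_smul, AlgHom.commutes] using
    RingQuot.mkAlgHom_rel K (ATLRel.quad (q := q) h i)

theorem commute_g (i j : Fin m) (hij : (i : ℕ) + 2 ≤ j) (hwrap : (i : ℕ) ≠ 0 ∨ (j : ℕ) + 1 ≠ m) :
    Commute (g q m i) (g q m j) := by
  have := j.isLt
  simpa only [g, map_mul, commute_iff_eq] using
    RingQuot.mkAlgHom_rel K (ATLRel.comm (q := q) (by omega) i j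
    (by simp only [ne_eq, Fin.ext_iff]; omega)
    (by simp only [ne_eq, Fin.ext_iff, csucc_val]; split_ifs <;> omega)
    (by simp only [ne_eq, Fin.ext_iff, csucc_val]; split_ifs <;> omega))

theorem g_braid (h : 3 ≤ m) (i : Fin m) :
    g q m i * g q m (csucc i) * g q m i = g q m (csucc i) * g q m i * g q m (csucc i) := by
  simpa only [g, map_mul] using RingQuot.mkAlgHom_rel K (ATLRel.braid (q := q) h i)

variable {B : Type*} [Ring B] [Algebra K B]

/-- Each relation of `TLhat_m(q)` involves at most two generators, so it holds for the images
`f` as soon as every such pair of images is the image, under some algebra map, of a pair of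
generators of `TLhat_{m'}(q)` in the same relative position. -/
theorem lift_eq_lift_of_ATLRel {m' : ℕ} (hm : 2 ≤ m) (hmm' : m ≤ m') (f : Fin m → B)
    (hf : ∀ i j : Fin m, (i = j ∨ 3 ≤ m) → ∃ (φ : ATL K q m' →ₐ[K] B) (i' j' : Fin m'),
      f i = φ (g q m' i') ∧ f j = φ (g q m' j') ∧ (j = csucc i → j' = csucc i') ∧
      (i ≠ j → j ≠ csucc i → i ≠ csucc j → i' ≠ j' ∧ j' ≠ csucc i' ∧ i' ≠ csucc j'))
    ⦃x y : FreeAlgebra K (Fin m)⦄ (hxy : ATLRel q m x y) : lift K f x = lift K f y := by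
  induction hxy with
  | degen h => omega
  | quad _ i =>
    obtain ⟨φ, i', -, hi, -⟩ := hf i i (.inl rfl)
    simpa only [g, map_mul, map_add, map_smul, AlgHom.commutes, lift_ι_apply, hi] using
      congrArg φ (RingQuot.mkAlgHom_rel K (ATLRel.quad (q := q) (by omega) i'))
  | comm h i j h1 h2 h3 =>
    obtain ⟨φ, i', j', hi, hj, -, hc⟩ := hf i j (.inr h)
    obtain ⟨h1', h2', h3'⟩ := hc h1 h2 h3
    simpa only [g, map_mul, lift_ι_apply, hi, hj] using
      congrArg φ (RingQuot.mkAlgHom_rel K (ATLRel.comm (q := q) (by omega) i' j' h1' h2' h3'))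
  | braid h i =>
    obtain ⟨φ, i', j', hi, hj, hs, -⟩ := hf i (csucc i) (.inr h)
    obtain rfl := hs rfl
    simpa only [g, map_mul, lift_ι_apply, hi, hj] using
      congrArg φ (RingQuot.mkAlgHom_rel K (ATLRel.braid (q := q) (by omega) i'))
  | vrel h i =>
    obtain ⟨φ, i', j', hi, hj, hs, -⟩ := hf i (csucc i) (.inr h)
    obtain rfl := hs rfl
    simpa only [g, map_mul, map_add, map_one, map_zero, lift_ι_apply, hi, hj] using
      congrArg φ (RingQuot.mkAlgHom_rel K (ATLRel.vrel (q := q) (by omega) i'))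

theorem existsUnique_algHom_apply_g (f : Fin m → B)
    (hf : ∀ ⦃x y : FreeAlgebra K (Fin m)⦄, ATLRel q m x y → lift K f x = lift K f y) :
    ∃! F : ATL K q m →ₐ[K] B, ∀ i, F (g q m i) = f i := by
  refine ⟨RingQuot.liftAlgHom K ⟨lift K f, hf⟩, fun i => ?_, fun F hF => ?_⟩
  · rw [g, RingQuot.liftAlgHom_mkAlgHom_apply, lift_ι_apply]
  · ext i
    simpa only [Function.comp_apply, AlgHom.comp_apply, RingQuot.liftAlgHom_mkAlgHom_apply,
      lift_ι_apply, g] using hF i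

end Relations

section Embedding

variable {K : Type*} [CommRing K] (q : K) (n : ℕ)

/-- The prescribed images `F_n(t_{σ_i})` and `F_n(t_{a_n})`. -/
noncomputable def embGen (i : Fin n) : ATL K q (n + 1) :=
  if (i : ℕ) < n - 1 then g q (n + 1) i.castSucc
  else g q (n + 1) ⟨n - 1, by omega⟩ * g q (n + 1) (Fin.last n) *
    qinv q (g q (n + 1) ⟨n - 1, by omega⟩)

variable {q n}

noncomputable def gUnit {m : ℕ} (hq : IsUnit q) (hm : 2 ≤ m) (i : Fin m) : (ATL K q m)ˣ :=
  unitOfQuadratic hq (g_sq q hm i)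

theorem embGen_eq_conjAlgHom_inv (hq : IsUnit q) (hn : 2 ≤ n) (k : Fin n) (hk : 0 < (k : ℕ)) :
    embGen q n k = conjAlgHom K (gUnit hq (by omega) (Fin.last n))⁻¹ (g q (n + 1) k.castSucc) := by
  have := k.isLt
  unfold embGen
  split_ifs
  · refine (conjAlgHom_eq_self (Commute.units_inv_left (u := gUnit hq _ _) ?_)).symm
    exact (commute_g q _ _ (by simp; omega) (by simp; omega)).symm
  · have hbraid := g_braid q (by omega) (⟨n - 1, by omega⟩ : Fin (n + 1))
    rw [show csucc (⟨n - 1, by omega⟩ : Fin (n + 1)) = Fin.last n from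
      Fin.ext (by simp only [csucc_val, Fin.val_last]; split_ifs <;> omega)] at hbraid
    have := congrArg Units.val (inv_mul_mul_eq_mul_mul_inv_of_braid
      (a := gUnit hq (by omega) (Fin.last n)) (t := gUnit hq (by omega) ⟨n - 1, by omega⟩)
      (Units.ext hbraid))
    rw [conjAlgHom_apply, inv_inv,
      show k.castSucc = ⟨n - 1, by omega⟩ from Fin.ext (by simp; omega)]
    exact this.symm

theorem embGen_eq_conjAlgHom (hq : IsUnit q) (h3 : 3 ≤ n) (k : Fin n)
    (hk : (k : ℕ) = 0 ∨ (k : ℕ) = n - 1) :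
    embGen q n k = conjAlgHom K (gUnit hq (by omega) ⟨n - 1, by omega⟩)
      (g q (n + 1) (if (k : ℕ) = 0 then 0 else Fin.last n)) := by
  rcases hk with hk | hk
  · rw [if_pos hk, embGen, if_pos (by omega), show k.castSucc = 0 from Fin.ext (by simpa)]
    refine (conjAlgHom_eq_self ?_).symm
    exact (commute_g q _ _ (by simp; omega) (by simp; omega)).symm
  · rw [if_neg (by omega), embGen, if_neg (by omega)]
    rfl

theorem embGen_pair (hq : IsUnit q) (hn : 2 ≤ n) (i j : Fin n) (hij : i = j ∨ 3 ≤ n) :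
    ∃ (φ : ATL K q (n + 1) →ₐ[K] ATL K q (n + 1)) (i' j' : Fin (n + 1)),
      embGen q n i = φ (g q (n + 1) i') ∧ embGen q n j = φ (g q (n + 1) j') ∧
      (j = csucc i → j' = csucc i') ∧
      (i ≠ j → j ≠ csucc i → i ≠ csucc j → i' ≠ j' ∧ j' ≠ csucc i' ∧ i' ≠ csucc j') := by
  have hi := i.isLt
  have hj := j.isLt
  by_cases hlt : (i : ℕ) < n - 1 ∧ (j : ℕ) < n - 1
  · refine ⟨AlgHom.id K _, i.castSucc, j.castSucc, by rw [AlgHom.id_apply, embGen, if_pos hlt.1],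
      by rw [AlgHom.id_apply, embGen, if_pos hlt.2], ?_, ?_⟩ <;>
    simp only [ne_eq, Fin.ext_iff, csucc_val, Fin.val_castSucc] <;> split_ifs <;> omega
  by_cases hpos : 0 < (i : ℕ) ∧ 0 < (j : ℕ)
  · refine ⟨_, i.castSucc, j.castSucc, embGen_eq_conjAlgHom_inv hq hn i hpos.1,
      embGen_eq_conjAlgHom_inv hq hn j hpos.2, ?_, ?_⟩ <;>
    simp only [ne_eq, Fin.ext_iff, csucc_val, Fin.val_castSucc] <;> split_ifs <;> omega
  -- now `{i, j} = {0, n - 1}`, realised by conjugating `g_0` and `g_n` by `g_{n-1}`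
  have h3 : 3 ≤ n := by
    rcases hij with rfl | h
    · omega
    · exact h
  refine ⟨_, _, _, embGen_eq_conjAlgHom hq h3 i (by omega), embGen_eq_conjAlgHom hq h3 j (by omega),
    ?_, ?_⟩ <;>
  simp only [ne_eq, Fin.ext_iff, csucc_val, apply_ite Fin.val, Fin.val_zero, Fin.val_last] <;>
  split_ifs <;> omega

end Embedding

end AffineTL

open AffineTL in
/-- for every `n ≥ 2` there is a unique unital `K`-algebra homomorphism
`F_n : TLhat_n(q) → TLhat_{n+1}(q)` with `F_n(t_{σ_i}) = g_{σ_i}` for `1 ≤ i ≤ n−1` and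
`F_n(t_{a_n}) = g_{σ_n}·g_{a_{n+1}}·g_{σ_n}⁻¹`. -/
theorem statement0 {K : Type*} [CommRing K]
    (q : K) (hq : IsUnit q)
    (n : ℕ) (hn : 2 ≤ n) :
    ∃! F : ATL K q n →ₐ[K] ATL K q (n + 1),
      (∀ i : ℕ, ∀ hi : i < n - 1,
          F (g q n ⟨i, by omega⟩) = g q (n + 1) ⟨i, by omega⟩) ∧
      F (g q n ⟨n - 1, by omega⟩) =
        g q (n + 1) ⟨n - 1, by omega⟩ * g q (n + 1) ⟨n, by omega⟩ *
          qinv q (g q (n + 1) ⟨n - 1, by omega⟩) := by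
  refine (existsUnique_congr fun F => ?_).mp (existsUnique_algHom_apply_g q (embGen q n)
    (lift_eq_lift_of_ATLRel q hn n.le_succ _ (embGen_pair hq hn)))
  constructor
  · intro hF
    refine ⟨fun i hi => (hF _).trans (if_pos hi), (hF _).trans (if_neg (by simp))⟩
  · rintro ⟨hlt, hlast⟩ i
    by_cases hi : (i : ℕ) < n - 1
    · exact (hlt i hi).trans (if_pos hi).symm
    · rw [show i = ⟨n - 1, by omega⟩ from Fin.ext (by simp only; omega), hlast, embGen,
        if_neg (by simp)]
      rfl
end

section
/- For any A_0, A_1 ∈ K and any sequence (α_i)_{i≥1} in K, there exists a unique trace t on TLhat_2(q) which is invariant under the Dynkin automorphism ψ_2 (i.e. t ∘ ψ_2 = t) and satisfies t(1) = A_0, t(f_{σ_1}) = A_1, and t((f_{σ_1}·f_{a_2})^i) = α_i for every i ≥ 1. -/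
section AlternatingProducts

variable {M : Type*} [Monoid M]

def altProd : M → M → ℕ → M
  | a, _, 0 => a
  | a, b, n + 1 => a * altProd b a n

theorem altProd_succ (a b : M) (n : ℕ) : altProd a b (n + 1) = a * altProd b a n := rfl

theorem altProd_two_mul_add_one (a b : M) (k : ℕ) :
    altProd a b (2 * k + 1) = (a * b) ^ (k + 1) := by
  induction k with
  | zero => simp [altProd]
  | succ k ih => rw [show 2 * (k + 1) + 1 = 2 * k + 1 + 2 by ring, altProd_succ, altProd_succ, ih,
      ← mul_assoc, pow_succ' (a * b) (k + 1)]

theorem altProd_two_mul_add_two (a b : M) (k : ℕ) :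
    altProd a b (2 * k + 2) = a * (b * a) ^ (k + 1) := by
  rw [altProd_succ, altProd_two_mul_add_one]

theorem IsIdempotentElem.mul_altProd {a : M} (ha : IsIdempotentElem a) (b : M) (n : ℕ) :
    a * altProd a b n = altProd a b n := by
  cases n with
  | zero => exact ha.eq
  | succ n => rw [altProd_succ, ← mul_assoc, ha.eq]

def altWords (a b : M) : Set M := insert 1 (Set.range (altProd a b) ∪ Set.range (altProd b a))

theorem altWords_comm (a b : M) : altWords a b = altWords b a := by
  rw [altWords, altWords, Set.union_comm]

theorem mul_mem_altWords {a : M} (ha : IsIdempotentElem a) (b : M) {x : M}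
    (hx : x ∈ altWords a b) : a * x ∈ altWords a b := by
  rcases hx with rfl | ⟨n, rfl⟩ | ⟨n, rfl⟩
  · exact Or.inr (Or.inl ⟨0, (mul_one a).symm⟩)
  · exact Or.inr (Or.inl ⟨n, (ha.mul_altProd b n).symm⟩)
  · exact Or.inr (Or.inl ⟨n + 1, rfl⟩)

theorem closure_pair_subset_altWords {a b : M} (ha : IsIdempotentElem a)
    (hb : IsIdempotentElem b) : (Submonoid.closure {a, b} : Set M) ⊆ altWords a b := by
  intro x hx
  induction hx using Submonoid.closure_induction_left with
  | one => exact Set.mem_insert 1 _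
  | mul_left x hx y _ hy =>
    rcases hx with rfl | rfl
    · exact mul_mem_altWords ha b hy
    · rw [altWords_comm] at hy ⊢
      exact mul_mem_altWords hb _ hy

end AlternatingProducts

section Idempotents

variable {K B : Type*} [CommRing K] [Ring B] [Algebra K B] (q : K)

theorem isIdempotentElem_inverse_smul_add_one (hq1 : IsUnit (q + 1)) {x : B}
    (hx : x * x = (q - 1) • x + algebraMap K B q) :
    IsIdempotentElem (Ring.inverse (q + 1) • (x + 1)) := by
  have hsq : (x + 1) * (x + 1) = (q + 1) • (x + 1) := by
    rw [add_mul, mul_add, mul_add, hx, Algebra.algebraMap_eq_smul_one, mul_one, one_mul, one_mul]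
    module
  rw [IsIdempotentElem, smul_mul_smul_comm, hsq, smul_smul, mul_assoc,
    Ring.inverse_mul_cancel _ hq1, mul_one]

theorem IsIdempotentElem.smul_sub_one_mul_self {e : B} (he : IsIdempotentElem e) :
    ((q + 1) • e - 1) * ((q + 1) • e - 1) =
      (q - 1) • ((q + 1) • e - 1) + algebraMap K B q := by
  rw [sub_mul, mul_sub, mul_sub, smul_mul_smul_comm, he.eq, Algebra.algebraMap_eq_smul_one,
    smul_mul_assoc, mul_smul_comm, one_mul, mul_one, one_mul]
  module

end Idempotents

theorem span_altWords_eq_top {K A : Type*} [CommRing K] [Ring A] [Algebra K A] {a b : A}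
    (ha : IsIdempotentElem a) (hb : IsIdempotentElem b) (hab : Algebra.adjoin K {a, b} = ⊤) :
    Submodule.span K (altWords a b) = ⊤ := by
  refine eq_top_mono (Submodule.span_mono (closure_pair_subset_altWords ha hb)) ?_
  rw [← Algebra.adjoin_eq_span, hab, Algebra.top_toSubmodule]

namespace AffineTL

section Traces

variable {K A B : Type*} [CommRing K] [Ring A] [Algebra K A] [Ring B] [Algebra K B]
  {T : A →ₗ[K] K}

theorem IsTrace.comp_algHom {T : B →ₗ[K] K} (hT : IsTrace T) (φ : A →ₐ[K] B) :
    IsTrace (T ∘ₗ φ.toLinearMap) := fun x y => by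
  simpa using hT (φ x) (φ y)

theorem IsTrace.add {T' : A →ₗ[K] K} (hT : IsTrace T) (hT' : IsTrace T') : IsTrace (T + T') :=
  fun x y => by simp [hT x y, hT' x y]

theorem IsTrace.smul (hT : IsTrace T) (c : K) : IsTrace (c • T) :=
  fun x y => by simp [hT x y]

theorem isTrace_algHom (χ : A →ₐ[K] K) : IsTrace χ.toLinearMap := fun x y => by
  simp [mul_comm]

theorem isTrace_comp_traceLinearMap {n R : Type*} [Fintype n] [DecidableEq n] [CommRing R]
    [Algebra K R] (L : R →ₗ[K] K) : IsTrace (L ∘ₗ Matrix.traceLinearMap n K R) :=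
  fun x y => by simp [Matrix.trace_mul_comm x y]

theorem IsTrace.apply_mul_pow_comm (hT : IsTrace T) (a b : A) (n : ℕ) :
    T ((a * b) ^ n) = T ((b * a) ^ n) := by
  cases n with
  | zero => simp
  | succ n => rw [pow_succ, ← mul_assoc, mul_pow_mul, hT, ← mul_assoc, ← pow_succ']

theorem IsTrace.apply_altProd_succ (hT : IsTrace T) {a : A} (ha : IsIdempotentElem a) (b : A)
    (n : ℕ) : T (altProd a b (n + 1)) = T ((a * b) ^ (n / 2 + 1)) := by
  obtain ⟨k, rfl | rfl⟩ := Nat.even_or_odd' n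
  · rw [altProd_two_mul_add_one, Nat.mul_div_cancel_left k two_pos]
  · have hdiv : (2 * k + 1) / 2 = k := by omega
    rw [altProd_two_mul_add_two, hT, pow_succ, mul_assoc, mul_assoc, ha.eq, ← pow_succ, hdiv,
      hT.apply_mul_pow_comm]

theorem IsTrace.ext_of_adjoin_eq_top {T T' : A →ₗ[K] K} (hT : IsTrace T) (hT' : IsTrace T')
    {a b : A} (ha : IsIdempotentElem a) (hb : IsIdempotentElem b)
    (hab : Algebra.adjoin K {a, b} = ⊤) (hone : T 1 = T' 1) (ha' : T a = T' a) (hb' : T b = T' b)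
    (hpow : ∀ n, T ((a * b) ^ (n + 1)) = T' ((a * b) ^ (n + 1))) : T = T' := by
  refine LinearMap.ext_on (span_altWords_eq_top ha hb hab) ?_
  rintro x (rfl | ⟨n, rfl⟩ | ⟨n, rfl⟩)
  · exact hone
  · cases n with
    | zero => exact ha'
    | succ n => rw [hT.apply_altProd_succ ha, hT'.apply_altProd_succ ha, hpow]
  · cases n with
    | zero => exact hb'
    | succ n => rw [hT.apply_altProd_succ hb, hT'.apply_altProd_succ hb, hT.apply_mul_pow_comm,
        hT'.apply_mul_pow_comm, hpow]

end Traces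

section TwoGenerators

variable {K : Type*} [CommRing K] (q : K)

/-- `f q 0` and `f q 1` are the idempotents `f_{σ_1}` and `f_{a_2}`. -/
noncomputable def f (i : Fin 2) : ATL K q 2 := Ring.inverse (q + 1) • (g q 2 i + 1)

theorem g_mul_self (i : Fin 2) :
    g q 2 i * g q 2 i = (q - 1) • g q 2 i + algebraMap K (ATL K q 2) q := by
  rw [g, ← map_mul, RingQuot.mkAlgHom_rel K (ATLRel.quad le_rfl i), map_add, map_smul,
    AlgHom.commutes]

variable {q}

theorem isIdempotentElem_f (hq1 : IsUnit (q + 1)) (i : Fin 2) : IsIdempotentElem (f q i) :=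
  isIdempotentElem_inverse_smul_add_one q hq1 (g_mul_self q i)

theorem g_eq_smul_f_sub_one (hq1 : IsUnit (q + 1)) (i : Fin 2) :
    g q 2 i = (q + 1) • f q i - 1 := by
  rw [f, smul_smul, Ring.mul_inverse_cancel _ hq1, one_smul, add_sub_cancel_right]

theorem adjoin_range_g : Algebra.adjoin K (Set.range (g q 2)) = ⊤ := by
  have hg : Set.range (g q 2) = RingQuot.mkAlgHom K (ATLRel q 2) '' Set.range (FreeAlgebra.ι K) :=
    by rw [← Set.range_comp]; rfl
  rw [hg, Algebra.adjoin_image, FreeAlgebra.adjoin_range_ι, Algebra.map_top,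
    (AlgHom.range_eq_top _).2 (RingQuot.mkAlgHom_surjective K _)]

theorem adjoin_f_eq_top (hq1 : IsUnit (q + 1)) : Algebra.adjoin K {f q 0, f q 1} = ⊤ := by
  refine eq_top_mono (Algebra.adjoin_le ?_) adjoin_range_g
  rintro _ ⟨i, rfl⟩
  rw [g_eq_smul_f_sub_one hq1]
  have hf : f q i ∈ Algebra.adjoin K {f q 0, f q 1} := by
    apply Algebra.subset_adjoin
    fin_cases i <;> simp
  exact Subalgebra.sub_mem _ (Subalgebra.smul_mem _ hf _) (Subalgebra.one_mem _)

theorem IsTrace.ext_of_f {T T' : ATL K q 2 →ₗ[K] K} (hT : IsTrace T) (hT' : IsTrace T')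
    (hq1 : IsUnit (q + 1)) (hone : T 1 = T' 1) (hf0 : T (f q 0) = T' (f q 0))
    (hf1 : T (f q 1) = T' (f q 1))
    (hpow : ∀ n, T ((f q 0 * f q 1) ^ (n + 1)) = T' ((f q 0 * f q 1) ^ (n + 1))) : T = T' :=
  hT.ext_of_adjoin_eq_top hT' (isIdempotentElem_f hq1 0) (isIdempotentElem_f hq1 1)
    (adjoin_f_eq_top hq1) hone hf0 hf1 hpow

end TwoGenerators

section Representations

variable {K B : Type*} [CommRing K] [Ring B] [Algebra K B] (q : K)

noncomputable def liftOfIdempotents (e : Fin 2 → B) (he : ∀ i, IsIdempotentElem (e i)) :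
    ATL K q 2 →ₐ[K] B :=
  RingQuot.liftAlgHom K ⟨FreeAlgebra.lift K fun i => (q + 1) • e i - 1, by
    rintro _ _ (⟨h, _⟩ | ⟨_, i⟩ | ⟨h⟩ | ⟨h⟩ | ⟨h⟩)
    · omega
    · simpa using (he i).smul_sub_one_mul_self q
    all_goals omega⟩

variable {q}

theorem liftOfIdempotents_f (hq1 : IsUnit (q + 1)) (e : Fin 2 → B)
    (he : ∀ i, IsIdempotentElem (e i)) (i : Fin 2) : liftOfIdempotents q e he (f q i) = e i := by
  rw [f, map_smul, map_add, map_one, g, liftOfIdempotents, RingQuot.liftAlgHom_mkAlgHom_apply,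
    FreeAlgebra.lift_ι_apply, sub_add_cancel, smul_smul, Ring.inverse_mul_cancel _ hq1, one_smul]

end Representations

section MatrixModel

open Polynomial

variable {K : Type*} [CommRing K]

/-- Rank-one idempotents whose product `!![X, 1; 0, 0]` satisfies `N ^ (n + 1) = X ^ n • N`, so
that the traces of its powers are the moments `X ^ (n + 1)`. -/
noncomputable def idemMatrix : Fin 2 → Matrix (Fin 2) (Fin 2) K[X] :=
  ![!![1, 0; 0, 0], !![X, 1; X * (1 - X), 1 - X]]

theorem idemMatrix_zero : idemMatrix (K := K) 0 = !![1, 0; 0, 0] := rfl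

theorem idemMatrix_one : idemMatrix (K := K) 1 = !![X, 1; X * (1 - X), 1 - X] := rfl

theorem isIdempotentElem_idemMatrix (i : Fin 2) : IsIdempotentElem (idemMatrix (K := K) i) := by
  fin_cases i
  · rw [Fin.zero_eta, idemMatrix_zero, IsIdempotentElem, Matrix.mul_fin_two]
    simp
  · rw [Fin.mk_one, idemMatrix_one, IsIdempotentElem, Matrix.mul_fin_two,
      Matrix.of.injective.eq_iff]
    ring_nf

theorem trace_idemMatrix (i : Fin 2) : (idemMatrix (K := K) i).trace = 1 := by
  fin_cases i
  · simp [idemMatrix_zero, Matrix.trace_fin_two]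
  · simp [idemMatrix_one, Matrix.trace_fin_two]

theorem trace_idemMatrix_mul_pow (n : ℕ) :
    ((idemMatrix (K := K) 0 * idemMatrix 1) ^ (n + 1)).trace = X ^ (n + 1) := by
  have hN : idemMatrix (K := K) 0 * idemMatrix 1 = !![X, 1; 0, 0] := by
    rw [idemMatrix_zero, idemMatrix_one, Matrix.mul_fin_two]
    simp
  have hpow : ∀ n : ℕ, (!![X, 1; 0, 0] : Matrix (Fin 2) (Fin 2) K[X]) ^ (n + 1) =
      (X : K[X]) ^ n • !![X, 1; 0, 0] := by
    intro n
    induction n with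
    | zero => simp
    | succ n ih =>
      rw [pow_succ, ih, smul_mul_assoc, Matrix.mul_fin_two, Matrix.smul_of, Matrix.smul_of]
      simp [pow_succ, mul_assoc]
  rw [hN, hpow, Matrix.trace_smul, Matrix.trace_fin_two]
  simp [pow_succ]

end MatrixModel

section Existence

open Polynomial

variable {K : Type*} [CommRing K] {q : K}

theorem exists_isTrace (hq1 : IsUnit (q + 1)) (A0 A1 : K) (α : ℕ → K) :
    ∃ t : ATL K q 2 →ₗ[K] K, IsTrace t ∧ t 1 = A0 ∧ t (f q 0) = A1 ∧ t (f q 1) = A1 ∧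
      ∀ n, t ((f q 0 * f q 1) ^ (n + 1)) = α (n + 1) := by
  let ρ := liftOfIdempotents q (idemMatrix (K := K)) isIdempotentElem_idemMatrix
  let χ := liftOfIdempotents q (0 : Fin 2 → K) fun _ => IsIdempotentElem.zero
  let L : K[X] →ₗ[K] K := Polynomial.lsum fun n =>
    LinearMap.smulRight (LinearMap.id : K →ₗ[K] K) (if n = 0 then A1 else α n)
  have hL : ∀ n, L (X ^ n) = if n = 0 then A1 else α n := fun n => by
    simp [L, ← monomial_one_right_eq_X_pow, sum_monomial_index]
  let τ := L ∘ₗ Matrix.traceLinearMap (Fin 2) K K[X] ∘ₗ ρ.toLinearMap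
  have hτ : IsTrace τ := (isTrace_comp_traceLinearMap L).comp_algHom ρ
  have hτf : ∀ i, τ (f q i) = A1 := fun i => by
    simpa [τ, ρ, liftOfIdempotents_f hq1, trace_idemMatrix] using hL 0
  have hχf : ∀ i, χ (f q i) = 0 := liftOfIdempotents_f hq1 _ _
  -- the character `χ` corrects the value at `1` without changing any other prescribed value
  refine ⟨τ + (A0 - τ 1) • χ.toLinearMap, hτ.add ((isTrace_algHom χ).smul _), by simp,
    ?_, ?_, ?_⟩
  · simp [hτf, hχf]
  · simp [hτf, hχf]
  · intro n
    simpa [τ, ρ, hχf, liftOfIdempotents_f hq1, trace_idemMatrix_mul_pow] using hL (n + 1)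

end Existence

end AffineTL

open AffineTL in
theorem statement4_general {K : Type*} [CommRing K]
    (q : K) (hq1 : IsUnit (q + 1))
    (ψ : ATL K q 2 ≃ₐ[K] ATL K q 2)
    (hψ1 : ψ (g q 2 0) = g q 2 1) (hψ2 : ψ (g q 2 1) = g q 2 0)
    (A0 A1 : K) (α : ℕ → K) :
    ∃! t : ATL K q 2 →ₗ[K] K,
      IsTrace t ∧
      (∀ x : ATL K q 2, t (ψ x) = t x) ∧
      t 1 = A0 ∧
      t (Ring.inverse (q + 1) • (g q 2 0 + 1)) = A1 ∧
      (∀ i : ℕ, 1 ≤ i →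
        t (((Ring.inverse (q + 1) • (g q 2 0 + 1)) *
            (Ring.inverse (q + 1) • (g q 2 1 + 1))) ^ i) = α i) := by
  obtain ⟨t, ht, ht1, ht0, ht1', htpow⟩ := exists_isTrace hq1 A0 A1 α
  have hψf0 : ψ (f q 0) = f q 1 := by simp [f, hψ1]
  have hψf1 : ψ (f q 1) = f q 0 := by simp [f, hψ2]
  have htψ : t ∘ₗ ψ.toAlgHom.toLinearMap = t :=
    (ht.comp_algHom ψ.toAlgHom).ext_of_f ht hq1 (by simp) (by simp [hψf0, ht0, ht1'])
      (by simp [hψf1, ht0, ht1']) fun n => by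
        simpa [hψf0, hψf1] using ht.apply_mul_pow_comm (f q 1) (f q 0) (n + 1)
  refine ⟨t, ⟨ht, fun x => LinearMap.congr_fun htψ x, ht1, ht0, fun i hi => ?_⟩, ?_⟩
  · obtain ⟨n, rfl⟩ := Nat.exists_eq_add_of_le' hi
    exact htpow n
  · rintro t' ⟨ht', ht'ψ, ht'1, ht'0, ht'pow⟩
    refine ht'.ext_of_f ht hq1 (ht'1.trans ht1.symm) (ht'0.trans ht0.symm) ?_ fun n => ?_
    · rw [ht1', ← hψf0, ht'ψ]
      exact ht'0
    · rw [htpow n]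
      exact ht'pow (n + 1) n.succ_pos

open AffineTL in
/-- classification of `ψ₂`-invariant traces on `TLhat_2(q)`. -/
theorem statement4 {K : Type*} [CommRing K] [IsDomain K] [CharZero K]
    (q sq : K) (hsq : sq * sq = q) (hq : IsUnit q) (hq1 : IsUnit (q + 1))
    (ψ : ATL K q 2 ≃ₐ[K] ATL K q 2)
    (hψ1 : ψ (g q 2 0) = g q 2 1) (hψ2 : ψ (g q 2 1) = g q 2 0)
    (A0 A1 : K) (α : ℕ → K) :
    ∃! t : ATL K q 2 →ₗ[K] K,
      IsTrace t ∧
      (∀ x : ATL K q 2, t (ψ x) = t x) ∧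
      t 1 = A0 ∧
      t (Ring.inverse (q + 1) • (g q 2 0 + 1)) = A1 ∧
      (∀ i : ℕ, 1 ≤ i →
        t (((Ring.inverse (q + 1) • (g q 2 0 + 1)) *
            (Ring.inverse (q + 1) • (g q 2 1 + 1))) ^ i) = α i) :=
  statement4_general q hq1 ψ hψ1 hψ2 A0 A1 α
end

section
/- In TLhat_3(q), for all positive integers h and k: (f_{σ_2}f_{σ_1}f_{a_3})^k · (f_{σ_1}f_{σ_2}f_{a_3})^h equals δ^{3h}·(f_{σ_2}f_{σ_1}f_{a_3})^{k−h} if h < k, and equals δ^{3k−1}·f_{σ_2}f_{a_3}·(f_{σ_1}f_{σ_2}f_{a_3})^{h−k} if h ≥ k. Similarly, (f_{σ_1}f_{σ_2}f_{a_3})^h · (f_{σ_2}f_{σ_1}f_{a_3})^k equals δ^{3k}·(f_{σ_1}f_{σ_2}f_{a_3})^{h−k} if h > k, and equals δ^{3h−1}·f_{σ_1}f_{a_3}·(f_{σ_2}f_{σ_1}f_{a_3})^{k−h} if h ≤ k. -/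
namespace AffineTL

/-- The idempotent `f_x = (q+1)⁻¹(x+1)` attached to the generator with index `i` of
`TLhat_3(q)` (`f_{σ_1}, f_{σ_2}, f_{a_3}` for `i = 0, 1, 2`). -/
noncomputable def f3 {K : Type*} [CommRing K] (q : K) (i : Fin 3) : ATL K q 3 :=
  Ring.inverse (q + 1) • (g q 3 i + 1)

end AffineTL


namespace AffineTL

variable {K : Type*} [CommRing K] (q : K)

lemma g_quad3 (i : Fin 3) :
    g q 3 i * g q 3 i = (q - 1) • g q 3 i + algebraMap K _ q := by
  have h := RingQuot.mkAlgHom_rel K (ATLRel.quad (q := q) (m := 3) (by norm_num) i)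
  simpa only [g, map_mul, map_add, map_smul, AlgHom.commutes] using h

lemma g_braid3 (i : Fin 3) :
    g q 3 i * g q 3 (csucc i) * g q 3 i
      = g q 3 (csucc i) * g q 3 i * g q 3 (csucc i) := by
  have h := RingQuot.mkAlgHom_rel K (ATLRel.braid (q := q) (m := 3) (le_refl 3) i)
  simpa only [g, map_mul] using h

lemma g_vrel3 (i : Fin 3) :
    g q 3 i * g q 3 (csucc i) * g q 3 i + g q 3 i * g q 3 (csucc i)
      + g q 3 (csucc i) * g q 3 i + g q 3 i + g q 3 (csucc i) + 1 = 0 := by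
  have h := RingQuot.mkAlgHom_rel K (ATLRel.vrel (q := q) (m := 3) (le_refl 3) i)
  simpa only [g, map_mul, map_add, map_one, map_zero] using h

lemma g_vrel3' (i j : Fin 3) (hij : i ≠ j) :
    g q 3 i * g q 3 j * g q 3 i + g q 3 i * g q 3 j
      + g q 3 j * g q 3 i + g q 3 i + g q 3 j + 1 = 0 := by
  have hd : ∀ i j : Fin 3, i ≠ j → (j = csucc i ∨ i = csucc j) := by decide
  rcases hd i j hij with rfl | rfl
  · exact g_vrel3 q i
  · have h := g_vrel3 q j
    rw [g_braid3 q j] at h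
    abel_nf at h ⊢
    exact h

lemma smul3 {R : Type*} [Ring R] [Algebra K R] (u : K) (A B C : R) :
    (u • A) * (u • B) * (u • C) = (u * u * u) • (A * B * C) := by
  simp only [smul_mul_assoc, mul_smul_comm, smul_smul, mul_assoc]

lemma f3_sand (i j : Fin 3) (hij : i ≠ j) :
    f3 q i * f3 q j * f3 q i = (q * Ring.inverse ((1 + q) ^ 2)) • f3 q i := by
  have hv := g_vrel3' q i j hij
  have hx := g_quad3 q i
  simp only [f3]
  set u : K := Ring.inverse (q + 1) with hu
  set x := g q 3 i
  set y := g q 3 j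
  have hE : (x + 1) * ((y + 1) * (x + 1)) = q • (x + 1) := by
    have expand : (x + 1) * ((y + 1) * (x + 1))
        = (x * y * x + x * y + y * x + x + y + 1) + (x * x + x) := by noncomm_ring
    rw [expand, hv, hx, Algebra.algebraMap_eq_smul_one]
    module
  simp only [smul_mul_assoc, mul_smul_comm, smul_smul, mul_assoc]
  rw [hE, smul_smul]
  congr 1
  rw [add_comm (1 : K) q, ← Ring.inverse_pow, ← hu]
  ring

lemma key_pows {R : Type*} [Ring R] [Algebra K R]
    (d : K) (a b c : R) (hab : a * b = (d ^ 2) • c) (hac : a * c = d • a) :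
    (∀ h k : ℕ, h < k → a ^ k * b ^ h = (d ^ (3 * h)) • a ^ (k - h)) ∧
    (∀ h k : ℕ, 1 ≤ k → k ≤ h → a ^ k * b ^ h = (d ^ (3 * k - 1)) • (c * b ^ (h - k))) := by
  have step1 : ∀ k h' : ℕ, a ^ (k + 1) * b ^ (h' + 1) = (d ^ 2) • (a ^ k * (c * b ^ h')) := by
    intro k h'
    calc a ^ (k + 1) * b ^ (h' + 1) = a ^ k * (a * b) * b ^ h' := by
          rw [pow_succ, pow_succ']; noncomm_ring
      _ = a ^ k * ((d ^ 2) • c) * b ^ h' := by rw [hab]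
      _ = (d ^ 2) • (a ^ k * (c * b ^ h')) := by
          rw [mul_smul_comm, smul_mul_assoc, mul_assoc]
  have step2 : ∀ k : ℕ, a ^ (k + 1) * c = d • a ^ (k + 1) := by
    intro k
    calc a ^ (k + 1) * c = a ^ k * (a * c) := by rw [pow_succ, mul_assoc]
      _ = d • a ^ (k + 1) := by rw [hac, mul_smul_comm, ← pow_succ]
  have step3 : ∀ k h' : ℕ,
      a ^ (k + 1 + 1) * b ^ (h' + 1) = (d ^ 3) • (a ^ (k + 1) * b ^ h') := by
    intro k h'
    calc a ^ (k + 1 + 1) * b ^ (h' + 1)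
        = (d ^ 2) • (a ^ (k + 1) * (c * b ^ h')) := step1 (k + 1) h'
      _ = (d ^ 2) • ((a ^ (k + 1) * c) * b ^ h') := by rw [mul_assoc]
      _ = (d ^ 2) • ((d • a ^ (k + 1)) * b ^ h') := by rw [step2 k]
      _ = (d ^ 3) • (a ^ (k + 1) * b ^ h') := by
          rw [smul_mul_assoc, smul_smul]
          congr 1
          ring
  constructor
  · intro h
    induction h with
    | zero => intro k _; simp
    | succ h ih =>
      intro k hk
      obtain ⟨k', rfl⟩ : ∃ k', k = k' + 1 + 1 := ⟨k - 2, by omega⟩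
      have e1 : 3 * (h + 1) = 3 + 3 * h := by ring
      have e2 : k' + 1 + 1 - (h + 1) = k' + 1 - h := by omega
      rw [step3 k' h, ih (k' + 1) (by omega), smul_smul, e1, e2, pow_add]
  · have P2 : ∀ k h : ℕ, k + 1 ≤ h →
        a ^ (k + 1) * b ^ h = (d ^ (3 * (k + 1) - 1)) • (c * b ^ (h - (k + 1))) := by
      intro k
      induction k with
      | zero =>
        intro h hh
        obtain ⟨h', rfl⟩ : ∃ h', h = h' + 1 := ⟨h - 1, by omega⟩
        simpa using step1 0 h'
      | succ k ih =>
        intro h hh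
        obtain ⟨h', rfl⟩ : ∃ h', h = h' + 1 := ⟨h - 1, by omega⟩
        have e1 : 3 * (k + 1 + 1) - 1 = 3 + (3 * (k + 1) - 1) := by omega
        have e2 : h' + 1 - (k + 1 + 1) = h' - (k + 1) := by omega
        rw [step3 k h', ih h' (by omega), smul_smul, e1, e2, pow_add]
    intro h k hk hkh
    obtain ⟨k', rfl⟩ : ∃ k', k = k' + 1 := ⟨k - 1, by omega⟩
    exact P2 k' h hkh

end AffineTL

open AffineTL in
/-- products of powers of `f_{σ_2}f_{σ_1}f_{a_3}` and `f_{σ_1}f_{σ_2}f_{a_3}`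
in `TLhat_3(q)`, where `δ = q/(1+q)²`. -/
theorem statement5 {K : Type*} [CommRing K] [IsDomain K] [CharZero K]
    (q sq : K) (hsq : sq * sq = q) (hq : IsUnit q) (hq1 : IsUnit (q + 1)) :
    ∀ h k : ℕ, 1 ≤ h → 1 ≤ k →
      (h < k →
        (f3 q 1 * f3 q 0 * f3 q 2) ^ k * (f3 q 0 * f3 q 1 * f3 q 2) ^ h =
          ((q * Ring.inverse ((1 + q) ^ 2)) ^ (3 * h)) •
            (f3 q 1 * f3 q 0 * f3 q 2) ^ (k - h)) ∧
      (k ≤ h →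
        (f3 q 1 * f3 q 0 * f3 q 2) ^ k * (f3 q 0 * f3 q 1 * f3 q 2) ^ h =
          ((q * Ring.inverse ((1 + q) ^ 2)) ^ (3 * k - 1)) •
            (f3 q 1 * f3 q 2 * (f3 q 0 * f3 q 1 * f3 q 2) ^ (h - k))) ∧
      (k < h →
        (f3 q 0 * f3 q 1 * f3 q 2) ^ h * (f3 q 1 * f3 q 0 * f3 q 2) ^ k =
          ((q * Ring.inverse ((1 + q) ^ 2)) ^ (3 * k)) •
            (f3 q 0 * f3 q 1 * f3 q 2) ^ (h - k)) ∧
      (h ≤ k →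
        (f3 q 0 * f3 q 1 * f3 q 2) ^ h * (f3 q 1 * f3 q 0 * f3 q 2) ^ k =
          ((q * Ring.inverse ((1 + q) ^ 2)) ^ (3 * h - 1)) •
            (f3 q 0 * f3 q 2 * (f3 q 1 * f3 q 0 * f3 q 2) ^ (k - h))) := by
  intro h k h1 k1
  have s01 := f3_sand q 0 1 (by decide)
  have s02 := f3_sand q 0 2 (by decide)
  have s10 := f3_sand q 1 0 (by decide)
  have s12 := f3_sand q 1 2 (by decide)
  have s20 := f3_sand q 2 0 (by decide)
  have s21 := f3_sand q 2 1 (by decide)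
  set d : K := q * Ring.inverse ((1 + q) ^ 2) with hdd
  have hAB : (f3 q 1 * f3 q 0 * f3 q 2) * (f3 q 0 * f3 q 1 * f3 q 2)
      = (d ^ 2) • (f3 q 1 * f3 q 2) := by
    calc (f3 q 1 * f3 q 0 * f3 q 2) * (f3 q 0 * f3 q 1 * f3 q 2)
        = f3 q 1 * (f3 q 0 * f3 q 2 * f3 q 0) * (f3 q 1 * f3 q 2) := by noncomm_ring
      _ = f3 q 1 * (d • f3 q 0) * (f3 q 1 * f3 q 2) := by rw [s02]
      _ = d • (f3 q 1 * f3 q 0 * f3 q 1 * f3 q 2) := by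
          rw [mul_smul_comm, smul_mul_assoc]
          congr 1
          noncomm_ring
      _ = d • ((d • f3 q 1) * f3 q 2) := by rw [s10]
      _ = (d ^ 2) • (f3 q 1 * f3 q 2) := by
          rw [smul_mul_assoc, smul_smul, ← pow_two]
  have hAC : (f3 q 1 * f3 q 0 * f3 q 2) * (f3 q 1 * f3 q 2)
      = d • (f3 q 1 * f3 q 0 * f3 q 2) := by
    calc (f3 q 1 * f3 q 0 * f3 q 2) * (f3 q 1 * f3 q 2)
        = f3 q 1 * f3 q 0 * (f3 q 2 * f3 q 1 * f3 q 2) := by noncomm_ring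
      _ = f3 q 1 * f3 q 0 * (d • f3 q 2) := by rw [s21]
      _ = d • (f3 q 1 * f3 q 0 * f3 q 2) := by rw [mul_smul_comm]
  have hBA : (f3 q 0 * f3 q 1 * f3 q 2) * (f3 q 1 * f3 q 0 * f3 q 2)
      = (d ^ 2) • (f3 q 0 * f3 q 2) := by
    calc (f3 q 0 * f3 q 1 * f3 q 2) * (f3 q 1 * f3 q 0 * f3 q 2)
        = f3 q 0 * (f3 q 1 * f3 q 2 * f3 q 1) * (f3 q 0 * f3 q 2) := by noncomm_ring
      _ = f3 q 0 * (d • f3 q 1) * (f3 q 0 * f3 q 2) := by rw [s12]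
      _ = d • (f3 q 0 * f3 q 1 * f3 q 0 * f3 q 2) := by
          rw [mul_smul_comm, smul_mul_assoc]
          congr 1
          noncomm_ring
      _ = d • ((d • f3 q 0) * f3 q 2) := by rw [s01]
      _ = (d ^ 2) • (f3 q 0 * f3 q 2) := by
          rw [smul_mul_assoc, smul_smul, ← pow_two]
  have hBC : (f3 q 0 * f3 q 1 * f3 q 2) * (f3 q 0 * f3 q 2)
      = d • (f3 q 0 * f3 q 1 * f3 q 2) := by
    calc (f3 q 0 * f3 q 1 * f3 q 2) * (f3 q 0 * f3 q 2)
        = f3 q 0 * f3 q 1 * (f3 q 2 * f3 q 0 * f3 q 2) := by noncomm_ring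
      _ = f3 q 0 * f3 q 1 * (d • f3 q 2) := by rw [s20]
      _ = d • (f3 q 0 * f3 q 1 * f3 q 2) := by rw [mul_smul_comm]
  obtain ⟨P1, P2⟩ := key_pows d (f3 q 1 * f3 q 0 * f3 q 2)
    (f3 q 0 * f3 q 1 * f3 q 2) (f3 q 1 * f3 q 2) hAB hAC
  obtain ⟨Q1, Q2⟩ := key_pows d (f3 q 0 * f3 q 1 * f3 q 2)
    (f3 q 1 * f3 q 0 * f3 q 2) (f3 q 0 * f3 q 2) hBA hBC
  exact ⟨fun hlt => P1 h k hlt, fun hle => P2 h k k1 hle,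
    fun hlt => Q1 k h hlt, fun hle => Q2 k h h1 hle⟩
end

section
/- Let W(Ã_2) be the affine Coxeter group with generators s_1, s_2, s_3 and let k ≥ 1 be an integer. Every fully commutative element of W(Ã_2) of Coxeter length 3k equals ψ_3^d((s_2s_1s_3)^k) or ψ_3^d((s_1s_2s_3)^k) for some d ∈ {0,1,2}; every fully commutative element of length 3k+1 equals ψ_3^d((s_2s_1s_3)^k s_2) or ψ_3^d((s_1s_2s_3)^k s_1) for some d ∈ {0,1,2}; and every fully commutative element of length 3k+2 equals ψ_3^d((s_2s_1s_3)^k s_2s_1) or ψ_3^d((s_1s_2s_3)^k s_1s_2) for some d ∈ {0,1,2}. -/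
/-!
Adjacent letters of a reduced word differ, and full commutativity forbids factors `s t s`; with
only three generators every three consecutive letters of a reduced word of a fully commutative
element are therefore distinct, so the word is a prefix of `(a b c)^∞` for an ordering `a, b, c`
of the generators. The rotation `i ↦ i + 1` induced by `ψ` permutes the six orderings in two
orbits, represented by `1 0 2` and `0 1 2`.
-/

namespace AffineTL

/-- The Coxeter matrix of type `Ã₂`: three generators, all bonds of order `3`. -/
def A2tilde : CoxeterMatrix (Fin 3) where
  M := fun i j => if i = j then 1 else 3
  isSymm := Matrix.IsSymm.ext (by decide)
  diagonal := by decide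
  off_diagonal := by decide

/-- `w` is fully commutative: no reduced word for `w` contains a factor `s t s`
with `s ≠ t` generators. -/
def FullyCommutative3 {W : Type*} [Group W] (cs : CoxeterSystem A2tilde W) (w : W) : Prop :=
  ∀ ω : List (Fin 3), cs.IsReduced ω → cs.wordProd ω = w →
    ∀ l₁ l₂ : List (Fin 3), ∀ i j : Fin 3, i ≠ j → ω ≠ l₁ ++ [i, j, i] ++ l₂

end AffineTL

namespace Fin

theorem eq_of_nodup_of_ne_of_ne {a b c d : Fin 3} (habc : [a, b, c].Nodup) (hbd : b ≠ d)
    (hda : d ≠ a) : d = c := by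
  revert a b c d; decide

theorem exists_nodup_triple_of_ne {a b : Fin 3} (hab : a ≠ b) : ∃ c, [a, b, c].Nodup := by
  revert a b; decide

theorem exists_eq_map_add_of_nodup_triple {a b c : Fin 3} (habc : [a, b, c].Nodup) :
    ∃ d : Fin 3, [a, b, c] = [1, 0, 2].map (· + d) ∨ [a, b, c] = [0, 1, 2].map (· + d) := by
  revert a b c; decide

end Fin

namespace CoxeterSystem

variable {B : Type*} {M : CoxeterMatrix B} {W : Type*} [Group W] {cs : CoxeterSystem M W}

theorem IsReduced.infix {ω u : List B} (hω : cs.IsReduced ω) (h : u <:+: ω) : cs.IsReduced u := by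
  obtain ⟨l₁, l₂, rfl⟩ := h
  have hu : u = ((l₁ ++ u ++ l₂).drop l₁.length).take u.length := by simp
  rw [hu]
  exact (hω.drop _).take _

theorem IsReduced.ne_of_pair_infix {ω : List B} (hω : cs.IsReduced ω) {i j : B}
    (h : [i, j] <:+: ω) : i ≠ j := by
  rintro rfl
  simpa [IsReduced, wordProd_cons] using hω.infix h

end CoxeterSystem

namespace AffineTL

def cyclicWord {α : Type*} (a b c : α) : ℕ → List α
  | 0 => []
  | n + 1 => a :: cyclicWord b c a n

theorem map_cyclicWord {α β : Type*} (f : α → β) (a b c : α) (n : ℕ) :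
    (cyclicWord a b c n).map f = cyclicWord (f a) (f b) (f c) n := by
  induction n generalizing a b c with
  | zero => rfl
  | succ n ih => simp only [cyclicWord, List.map_cons, ih]

theorem wordProd_cyclicWord_three_mul_add {B : Type*} {M : CoxeterMatrix B} {W : Type*} [Group W]
    (cs : CoxeterSystem M W) (a b c : B) (k r : ℕ) :
    cs.wordProd (cyclicWord a b c (3 * k + r)) =
      (cs.simple a * cs.simple b * cs.simple c) ^ k * cs.wordProd (cyclicWord a b c r) := by
  induction k with
  | zero => simp
  | succ k ih =>
    rw [show 3 * (k + 1) + r = 3 * k + r + 3 by ring]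
    calc cs.wordProd (cyclicWord a b c (3 * k + r + 3))
        = cs.simple a * cs.simple b * cs.simple c * cs.wordProd (cyclicWord a b c (3 * k + r)) := by
          simp [cyclicWord, cs.wordProd_cons, mul_assoc]
      _ = _ := by simp only [ih, pow_succ', mul_assoc]

theorem cons_cons_eq_cyclicWord {a b c : Fin 3} (habc : [a, b, c].Nodup) {l : List (Fin 3)}
    (hne : ∀ x y, [x, y] <:+: a :: b :: l → x ≠ y)
    (hbraid : ∀ x y, [x, y, x] <:+: a :: b :: l → x = y) :
    a :: b :: l = cyclicWord a b c (l.length + 2) := by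
  induction l generalizing a b c with
  | nil => rfl
  | cons d l ih =>
    have hab : a ≠ b := hne a b (List.prefix_append [a, b] (d :: l)).isInfix
    have hbd : b ≠ d := hne b d (List.infix_cons (List.prefix_append [b, d] l).isInfix)
    have hda : d ≠ a := by
      rintro rfl
      exact hab (hbraid d b (List.prefix_append [d, b, d] l).isInfix)
    obtain rfl : d = c := Fin.eq_of_nodup_of_ne_of_ne habc hbd hda
    have hbda : [b, d, a].Nodup := by simp_all [eq_comm]
    rw [ih hbda (fun x y h => hne x y (List.infix_cons h))
      (fun x y h => hbraid x y (List.infix_cons h))]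
    rfl

theorem exists_eq_cyclicWord {l : List (Fin 3)} (hne : ∀ x y, [x, y] <:+: l → x ≠ y)
    (hbraid : ∀ x y, [x, y, x] <:+: l → x = y) :
    ∃ a b c : Fin 3, [a, b, c].Nodup ∧ l = cyclicWord a b c l.length := by
  match l with
  | [] => exact ⟨0, 1, 2, by decide, rfl⟩
  | [a] =>
    obtain ⟨c, habc⟩ := Fin.exists_nodup_triple_of_ne (a := a) (b := a + 1) (by simp)
    exact ⟨a, a + 1, c, habc, rfl⟩
  | a :: b :: l =>
    have hab : a ≠ b := hne a b (List.prefix_append [a, b] l).isInfix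
    obtain ⟨c, habc⟩ := Fin.exists_nodup_triple_of_ne hab
    exact ⟨a, b, c, habc, cons_cons_eq_cyclicWord habc hne hbraid⟩

open Fin.NatCast in
theorem iterate_wordProd {M : CoxeterMatrix (Fin 3)} {W : Type*} [Group W]
    (cs : CoxeterSystem M W) (ψ : W ≃* W) (hψ : ∀ i : Fin 3, ψ (cs.simple i) = cs.simple (i + 1))
    (d : ℕ) (ω : List (Fin 3)) :
    (⇑ψ)^[d] (cs.wordProd ω) = cs.wordProd (ω.map (· + (d : Fin 3))) := by
  induction d with
  | zero => simp
  | succ d ih =>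
    rw [Function.iterate_succ_apply', ih]
    simp [CoxeterSystem.wordProd, map_list_prod, hψ, Function.comp_def, add_assoc]

section FullyCommutative

variable {W : Type*} [Group W] (cs : CoxeterSystem A2tilde W) {w : W}

theorem FullyCommutative3.eq_of_braid_infix (hw : FullyCommutative3 cs w) {ω : List (Fin 3)}
    (hω : cs.IsReduced ω) (hprod : cs.wordProd ω = w) {i j : Fin 3} (h : [i, j, i] <:+: ω) :
    i = j := by
  by_contra hij
  obtain ⟨l₁, l₂, hl⟩ := h
  exact hw ω hω hprod l₁ l₂ i j hij hl.symm

theorem FullyCommutative3.exists_eq_wordProd_cyclicWord (hw : FullyCommutative3 cs w) :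
    ∃ a b c : Fin 3, [a, b, c].Nodup ∧ w = cs.wordProd (cyclicWord a b c (cs.length w)) := by
  obtain ⟨ω, hω, rfl⟩ := cs.exists_isReduced w
  obtain ⟨a, b, c, habc, hωc⟩ := exists_eq_cyclicWord (fun _ _ => hω.ne_of_pair_infix)
    (fun _ _ => hw.eq_of_braid_infix cs hω rfl)
  exact ⟨a, b, c, habc, by rw [hω.eq]; exact congrArg cs.wordProd hωc⟩

theorem FullyCommutative3.exists_eq_iterate_wordProd_cyclicWord (hw : FullyCommutative3 cs w)
    (ψ : W ≃* W) (hψ : ∀ i : Fin 3, ψ (cs.simple i) = cs.simple (i + 1)) :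
    ∃ d : Fin 3,
      w = (⇑ψ)^[d.val] (cs.wordProd (cyclicWord 1 0 2 (cs.length w))) ∨
      w = (⇑ψ)^[d.val] (cs.wordProd (cyclicWord 0 1 2 (cs.length w))) := by
  obtain ⟨a, b, c, habc, hw'⟩ := hw.exists_eq_wordProd_cyclicWord cs
  obtain ⟨d, hd⟩ := Fin.exists_eq_map_add_of_nodup_triple habc
  refine ⟨d, ?_⟩
  simp only [iterate_wordProd cs ψ hψ, Fin.cast_val_eq_self, map_cyclicWord]
  simp only [List.map_cons, List.map_nil, List.cons.injEq, and_true] at hd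
  rcases hd with ⟨rfl, rfl, rfl⟩ | ⟨rfl, rfl, rfl⟩
  · exact Or.inl hw'
  · exact Or.inr hw'

end FullyCommutative

end AffineTL

open AffineTL in
theorem statement6_general {W : Type*} [Group W] (cs : CoxeterSystem A2tilde W)
    (ψ : W ≃* W) (hψ : ∀ i : Fin 3, ψ (cs.simple i) = cs.simple (i + 1))
    (w : W) (hw : FullyCommutative3 cs w) (k : ℕ) :
    (cs.length w = 3 * k →
      ∃ d : Fin 3,
        w = (⇑ψ)^[d.val] ((cs.simple 1 * cs.simple 0 * cs.simple 2) ^ k) ∨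
        w = (⇑ψ)^[d.val] ((cs.simple 0 * cs.simple 1 * cs.simple 2) ^ k)) ∧
    (cs.length w = 3 * k + 1 →
      ∃ d : Fin 3,
        w = (⇑ψ)^[d.val] ((cs.simple 1 * cs.simple 0 * cs.simple 2) ^ k * cs.simple 1) ∨
        w = (⇑ψ)^[d.val] ((cs.simple 0 * cs.simple 1 * cs.simple 2) ^ k * cs.simple 0)) ∧
    (cs.length w = 3 * k + 2 →
      ∃ d : Fin 3,
        w = (⇑ψ)^[d.val]
          ((cs.simple 1 * cs.simple 0 * cs.simple 2) ^ k * cs.simple 1 * cs.simple 0) ∨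
        w = (⇑ψ)^[d.val]
          ((cs.simple 0 * cs.simple 1 * cs.simple 2) ^ k * cs.simple 0 * cs.simple 1)) := by
  obtain ⟨d, hd⟩ := hw.exists_eq_iterate_wordProd_cyclicWord cs ψ hψ
  have hlen : ∀ r, cs.length w = 3 * k + r →
      w = (⇑ψ)^[d.val] ((cs.simple 1 * cs.simple 0 * cs.simple 2) ^ k *
        cs.wordProd (cyclicWord 1 0 2 r)) ∨
      w = (⇑ψ)^[d.val] ((cs.simple 0 * cs.simple 1 * cs.simple 2) ^ k *
        cs.wordProd (cyclicWord 0 1 2 r)) := by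
    intro r hr
    rwa [hr, wordProd_cyclicWord_three_mul_add, wordProd_cyclicWord_three_mul_add] at hd
  refine ⟨fun h => ⟨d, ?_⟩, fun h => ⟨d, ?_⟩, fun h => ⟨d, ?_⟩⟩
  · simpa only [cyclicWord, CoxeterSystem.wordProd_nil, mul_one] using hlen 0 h
  · simpa only [cyclicWord, CoxeterSystem.wordProd_singleton] using hlen 1 h
  · simpa only [cyclicWord, CoxeterSystem.wordProd_cons, CoxeterSystem.wordProd_nil, mul_one,
      mul_assoc] using hlen 2 h

open AffineTL in
/-- classification of the fully commutative elements of `W(Ã₂)` of length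
`3k`, `3k+1`, `3k+2` (`k ≥ 1`) up to powers of the Dynkin automorphism `ψ₃`
(`s₁ ↦ s₂ ↦ s₃ ↦ s₁`, indices `0 ↦ 1 ↦ 2 ↦ 0`). -/
theorem statement6 {W : Type*} [Group W] (cs : CoxeterSystem A2tilde W)
    (ψ : W ≃* W) (hψ : ∀ i : Fin 3, ψ (cs.simple i) = cs.simple (i + 1))
    (w : W) (hw : FullyCommutative3 cs w) (k : ℕ) (hk : 1 ≤ k) :
    (cs.length w = 3 * k →
      ∃ d : Fin 3,
        w = (⇑ψ)^[d.val] ((cs.simple 1 * cs.simple 0 * cs.simple 2) ^ k) ∨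
        w = (⇑ψ)^[d.val] ((cs.simple 0 * cs.simple 1 * cs.simple 2) ^ k)) ∧
    (cs.length w = 3 * k + 1 →
      ∃ d : Fin 3,
        w = (⇑ψ)^[d.val] ((cs.simple 1 * cs.simple 0 * cs.simple 2) ^ k * cs.simple 1) ∨
        w = (⇑ψ)^[d.val] ((cs.simple 0 * cs.simple 1 * cs.simple 2) ^ k * cs.simple 0)) ∧
    (cs.length w = 3 * k + 2 →
      ∃ d : Fin 3,
        w = (⇑ψ)^[d.val]
          ((cs.simple 1 * cs.simple 0 * cs.simple 2) ^ k * cs.simple 1 * cs.simple 0) ∨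
        w = (⇑ψ)^[d.val]
          ((cs.simple 0 * cs.simple 1 * cs.simple 2) ^ k * cs.simple 0 * cs.simple 1)) :=
  statement6_general cs ψ hψ w hw k
end
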